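/- (Example 2: correct data-averaged posterior does not imply passing SBC.) In the uniform–Bernoulli model, define the posterior family φ_A by φ_A(θ|0) := 2θ and φ_A(θ|1) := 2 − 2θ (the true posteriors with the roles of y = 0 and y = 1 swapped). Then: (i) φ_A has the correct data-averaged posterior for the projection f₁(θ,y) := θ, i.e. (1/2)(C_{φ_A,f₁}(s|0) + C_{φ_A,f₁}(s|1)) = s for every s ∈ [0,1], which equals the prior CDF; but (ii) φ_A does not pass continuous SBC with respect to f₁: there exists x ∈ [0,1] such that (1/2)(q_{φ_A,f₁}(x|0) + q_{φ_A,f₁}(x|1)) ≠ x, where q_{φ_A,f₁}(x|0) = 2√x − x and q_{φ_A,f₁}(x|1) = (1 − √(1−x))². -/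

import Mathlib

open MeasureTheory Filter Topology

noncomputable section

namespace SBC

variable {Θ Y : Type*} [MeasurableSpace Θ] [MeasurableSpace Y]

/-- Marginal density of the data: `π_marg(y) = ∫ obs(y|θ) prior(θ) dλΘ(θ)`. -/
def marg (lΘ : Measure Θ) (prior : Θ → ℝ) (obs : Y → Θ → ℝ) (y : Y) : ℝ :=
  ∫ θ, obs y θ * prior θ ∂lΘ

/-- Posterior density: `π_post(θ|y) = obs(y|θ) prior(θ) / π_marg(y)`. -/
def post (lΘ : Measure Θ) (prior : Θ → ℝ) (obs : Y → Θ → ℝ) (θ : Θ) (y : Y) : ℝ :=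
  obs y θ * prior θ / marg lΘ prior obs y

/-- CDF of the test quantity `f` under the density `φ(·|y)`:
`C_{φ,f}(s|y) = ∫ 1[f(θ,y) ≤ s] φ(θ|y) dλΘ(θ)`. -/
def Cdf (lΘ : Measure Θ) (φ f : Θ → Y → ℝ) (s : ℝ) (y : Y) : ℝ :=
  ∫ θ, (if f θ y ≤ s then φ θ y else 0) ∂lΘ

/-- Tie probability of the test quantity `f` under the density `φ(·|y)`:
`D_{φ,f}(s|y) = ∫ 1[f(θ,y) = s] φ(θ|y) dλΘ(θ)`. -/
def Dtie (lΘ : Measure Θ) (φ f : Θ → Y → ℝ) (s : ℝ) (y : Y) : ℝ :=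
  ∫ θ, (if f θ y = s then φ θ y else 0) ∂lΘ

/-- The family of densities `φ` has no ties w.r.t. `f`. -/
def NoTies (lΘ : Measure Θ) (φ f : Θ → Y → ℝ) : Prop :=
  ∀ (θt : Θ) (y : Y), Dtie lΘ φ f (f θt y) y = 0

/-- The continuous rank CDF `r_{φ,f}(x | θ̃, y)`. -/
def contRank (lΘ : Measure Θ) (φ f : Θ → Y → ℝ) (x : ℝ) (θt : Θ) (y : Y) : ℝ :=
  if Dtie lΘ φ f (f θt y) y = 0 then
    (if Cdf lΘ φ f (f θt y) y ≤ x then 1 else 0)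
  else
    min 1 (max 0 ((x - Cdf lΘ φ f (f θt y) y + Dtie lΘ φ f (f θt y) y) /
      Dtie lΘ φ f (f θt y) y))

/-- The continuous `q_{φ,f}(x|y)`: average of the continuous rank CDF over the true posterior. -/
def qfun (lΘ : Measure Θ) (prior : Θ → ℝ) (obs : Y → Θ → ℝ) (φ f : Θ → Y → ℝ)
    (x : ℝ) (y : Y) : ℝ :=
  ∫ θt, contRank lΘ φ f x θt y * post lΘ prior obs θt y ∂lΘ

/-- `φ` passes continuous SBC w.r.t. `f`. -/
def PassesContSBC (lΘ : Measure Θ) (lY : Measure Y) (prior : Θ → ℝ)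
    (obs : Y → Θ → ℝ) (φ f : Θ → Y → ℝ) : Prop :=
  ∀ x ∈ Set.Icc (0 : ℝ) 1,
    ∫ y, qfun lΘ prior obs φ f x y * marg lΘ prior obs y ∂lY = x

/-- Number of posterior draws whose test-quantity value is strictly below that of `θt`. -/
def Nless (f : Θ → Y → ℝ) {M : ℕ} (θs : Fin M → Θ) (θt : Θ) (y : Y) : ℕ :=
  (Finset.univ.filter fun m => f (θs m) y < f θt y).card

/-- Number of posterior draws whose test-quantity value ties with that of `θt`. -/
def Neq (f : Θ → Y → ℝ) {M : ℕ} (θs : Fin M → Θ) (θt : Θ) (y : Y) : ℕ :=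
  (Finset.univ.filter fun m => f (θs m) y = f θt y).card

/-- The measure on `Θ` with density `φ(·|y)` w.r.t. `lΘ`. -/
def postFamMeas (lΘ : Measure Θ) (φ : Θ → Y → ℝ) (y : Y) : Measure Θ :=
  lΘ.withDensity fun θ => ENNReal.ofReal (φ θ y)

/-- The `M`-sample rank CDF `R_{φ,f}(i | θ̃, y) = Pr(N_total ≤ i)` for i.i.d. draws from `φ_y`. -/
def sampleRank (lΘ : Measure Θ) (φ f : Θ → Y → ℝ) (M i : ℕ) (θt : Θ) (y : Y) : ℝ :=
  ∫ θs : Fin M → Θ,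
    min 1 (max 0 (((i : ℝ) + 1 - (Nless f θs θt y : ℝ)) / ((Neq f θs θt y : ℝ) + 1)))
    ∂(Measure.pi fun _ : Fin M => postFamMeas lΘ φ y)

/-- The `M`-sample `Q_{φ,f}(i|y)`: average of the sample rank CDF over the true posterior. -/
def Qfun (lΘ : Measure Θ) (prior : Θ → ℝ) (obs : Y → Θ → ℝ)
    (φ f : Θ → Y → ℝ) (M i : ℕ) (y : Y) : ℝ :=
  ∫ θt, sampleRank lΘ φ f M i θt y * post lΘ prior obs θt y ∂lΘ

/-- `φ` passes `M`-sample SBC w.r.t. `f`. -/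
def PassesSampleSBC (lΘ : Measure Θ) (lY : Measure Y) (prior : Θ → ℝ)
    (obs : Y → Θ → ℝ) (φ f : Θ → Y → ℝ) (M : ℕ) : Prop :=
  ∀ i < M, ∫ y, Qfun lΘ prior obs φ f M i y * marg lΘ prior obs y ∂lY
    = ((i : ℝ) + 1) / ((M : ℝ) + 1)

/-- Real-valued quantile function `C⁻¹_{φ,f}(x|y) = inf {s ∈ ℝ : x ≤ C_{φ,f}(s|y)}`. -/
def quantileR (lΘ : Measure Θ) (φ f : Θ → Y → ℝ) (x : ℝ) (y : Y) : ℝ :=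
  sInf {s : ℝ | x ≤ Cdf lΘ φ f s y}

/-- Reference measure on the parameter space of the uniform–Bernoulli model:
Lebesgue measure restricted to `[0,1]`. -/
def ubMeas : Measure ℝ := MeasureTheory.volume.restrict (Set.Icc (0 : ℝ) 1)

/-- Prior density of the uniform–Bernoulli model: uniform on `[0,1]`. -/
def ubPrior : ℝ → ℝ := fun _ => 1

/-- Observation density of the uniform–Bernoulli model:
`π_obs(y|θ) = θ^y (1-θ)^(1-y)` for `y ∈ {0,1}` (encoded as `Bool`). -/
def ubObs : Bool → ℝ → ℝ := fun y θ => if y then θ else 1 - θ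

/-- The projection test quantity `f₁(θ, y) = θ`. -/
def f1 : ℝ → Bool → ℝ := fun θ _ => θ

/-- The swapped posterior family: `φ_A(θ|0) = 2θ`, `φ_A(θ|1) = 2 − 2θ`. -/
def phiA : ℝ → Bool → ℝ := fun θ y => if y then 2 - 2 * θ else 2 * θ


/-! ### Auxiliary lemmas for the uniform–Bernoulli computation -/

lemma ub_integral_ite_le (g : ℝ → ℝ) (s : ℝ) (hs : s ∈ Set.Icc (0:ℝ) 1) :
    ∫ θ, (if θ ≤ s then g θ else 0) ∂ubMeas = ∫ θ in Set.Icc (0:ℝ) s, g θ := by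
  have h1 : (fun θ : ℝ => if θ ≤ s then g θ else 0) = Set.indicator (Set.Iic s) g := by
    funext θ; simp [Set.indicator_apply, Set.mem_Iic]
  have h2 : Set.Iic s ∩ Set.Icc (0:ℝ) 1 = Set.Icc 0 s := by
    ext θ
    constructor
    · rintro ⟨h1, h2, _⟩; exact ⟨h2, h1⟩
    · rintro ⟨h2, h1⟩; exact ⟨h1, h2, h1.trans hs.2⟩
  rw [ubMeas, h1, integral_indicator measurableSet_Iic,
    Measure.restrict_restrict measurableSet_Iic, h2]

lemma ub_integral_id (s : ℝ) (h : 0 ≤ s) : ∫ θ in Set.Icc (0:ℝ) s, 2 * θ = s^2 := by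
  rw [MeasureTheory.integral_Icc_eq_integral_Ioc, ← intervalIntegral.integral_of_le h,
    intervalIntegral.integral_const_mul, integral_id]
  ring

lemma ub_integral_one_sub (s : ℝ) (h : 0 ≤ s) :
    ∫ θ in Set.Icc (0:ℝ) s, 2 * (1 - θ) = 2*s - s^2 := by
  rw [MeasureTheory.integral_Icc_eq_integral_Ioc, ← intervalIntegral.integral_of_le h,
    intervalIntegral.integral_const_mul,
    intervalIntegral.integral_sub intervalIntegrable_const intervalIntegral.intervalIntegrable_id,
    integral_id]
  simp; ring

lemma ub_marg (y : Bool) : marg ubMeas ubPrior ubObs y = 1/2 := by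
  have h0 : ∀ g : ℝ → ℝ, (∫ θ, g θ ∂ubMeas) = ∫ θ in Set.Icc (0:ℝ) 1, g θ := fun g => rfl
  cases y
  · show (∫ θ, (1 - θ) * 1 ∂ubMeas) = 1/2
    simp only [mul_one, h0]
    have := ub_integral_one_sub 1 (by norm_num)
    have h2 : ∀ θ : ℝ, 2 * (1 - θ) = 2 * (1 - θ) := fun _ => rfl
    have h3 : (∫ θ in Set.Icc (0:ℝ) 1, (1-θ)) = (1/2) * ∫ θ in Set.Icc (0:ℝ) 1, 2 * (1 - θ) := by
      rw [← MeasureTheory.integral_const_mul]; congr 1; funext θ; ring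
    rw [h3, this]; norm_num
  · show (∫ θ, θ * 1 ∂ubMeas) = 1/2
    simp only [mul_one, h0]
    have := ub_integral_id 1 (by norm_num)
    have h3 : (∫ θ in Set.Icc (0:ℝ) 1, θ) = (1/2) * ∫ θ in Set.Icc (0:ℝ) 1, 2 * θ := by
      rw [← MeasureTheory.integral_const_mul]; congr 1; funext θ; ring
    rw [h3, this]; norm_num

lemma ub_post_false (θ : ℝ) : post ubMeas ubPrior ubObs θ false = 2 * (1 - θ) := by
  simp only [post, ubPrior, ubObs, ub_marg, mul_one]
  norm_num; ring

lemma ub_post_true (θ : ℝ) : post ubMeas ubPrior ubObs θ true = 2 * θ := by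
  simp only [post, ubPrior, ubObs, ub_marg, mul_one]
  norm_num; ring

lemma ub_dtie (s : ℝ) (y : Bool) : Dtie ubMeas phiA f1 s y = 0 := by
  show (∫ θ, (if θ = s then phiA θ y else 0) ∂ubMeas) = 0
  have h1 : (fun θ : ℝ => if θ = s then phiA θ y else 0)
      = Set.indicator {s} (fun θ => phiA θ y) := by
    funext θ; simp [Set.indicator_apply]
  have h2 : ubMeas.restrict {s} = 0 := by
    rw [Measure.restrict_eq_zero, ubMeas, Measure.restrict_apply (measurableSet_singleton s)]
    exact measure_mono_null Set.inter_subset_left (measure_singleton s)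
  rw [h1, integral_indicator (measurableSet_singleton s), h2, integral_zero_measure]

lemma ub_cdf_false (s : ℝ) (hs : s ∈ Set.Icc (0:ℝ) 1) :
    Cdf ubMeas phiA f1 s false = s^2 := by
  show (∫ θ, (if θ ≤ s then phiA θ false else 0) ∂ubMeas) = s^2
  have : (fun θ : ℝ => if θ ≤ s then phiA θ false else 0)
      = fun θ : ℝ => if θ ≤ s then 2 * θ else 0 := by
    funext θ; simp [phiA]
  rw [this, ub_integral_ite_le _ s hs, ub_integral_id s hs.1]

lemma ub_cdf_true (s : ℝ) (hs : s ∈ Set.Icc (0:ℝ) 1) :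
    Cdf ubMeas phiA f1 s true = 2*s - s^2 := by
  show (∫ θ, (if θ ≤ s then phiA θ true else 0) ∂ubMeas) = 2*s - s^2
  have : (fun θ : ℝ => if θ ≤ s then phiA θ true else 0)
      = fun θ : ℝ => if θ ≤ s then 2 * (1 - θ) else 0 := by
    funext θ; by_cases h : θ ≤ s <;> simp [phiA, h] <;> ring
  rw [this, ub_integral_ite_le _ s hs, ub_integral_one_sub s hs.1]

lemma ub_qfun_false (x : ℝ) (hx : x ∈ Set.Icc (0:ℝ) 1) :
    qfun ubMeas ubPrior ubObs phiA f1 x false = 2 * Real.sqrt x - x := by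
  have hsx : Real.sqrt x ∈ Set.Icc (0:ℝ) 1 :=
    ⟨Real.sqrt_nonneg x, by
      calc Real.sqrt x ≤ Real.sqrt 1 := Real.sqrt_le_sqrt hx.2
      _ = 1 := Real.sqrt_one⟩
  have key : ∀ θ ∈ Set.Icc (0:ℝ) 1,
      contRank ubMeas phiA f1 x θ false * post ubMeas ubPrior ubObs θ false
        = if θ ≤ Real.sqrt x then 2 * (1 - θ) else 0 := by
    intro θ hθ
    rw [contRank, if_pos (ub_dtie _ _), ub_post_false, f1, ub_cdf_false θ hθ]
    have hiff : θ^2 ≤ x ↔ θ ≤ Real.sqrt x := (Real.le_sqrt hθ.1 hx.1).symm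
    by_cases h : θ ≤ Real.sqrt x
    · rw [if_pos (hiff.mpr h), if_pos h, one_mul]
    · rw [if_neg (fun hc => h (hiff.mp hc)), if_neg h, zero_mul]
  rw [qfun]
  refine Eq.trans (setIntegral_congr_fun (μ := MeasureTheory.volume) measurableSet_Icc key) ?_
  refine Eq.trans (ub_integral_ite_le _ _ hsx) ?_
  rw [ub_integral_one_sub _ hsx.1, Real.sq_sqrt hx.1]

lemma ub_qfun_true (x : ℝ) (hx : x ∈ Set.Icc (0:ℝ) 1) :
    qfun ubMeas ubPrior ubObs phiA f1 x true = (1 - Real.sqrt (1 - x)) ^ 2 := by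
  set t : ℝ := 1 - Real.sqrt (1 - x) with ht
  have h1x : (0:ℝ) ≤ 1 - x := by linarith [hx.2]
  have hs1 : Real.sqrt (1-x) ≤ 1 := by
    calc Real.sqrt (1-x) ≤ Real.sqrt 1 := Real.sqrt_le_sqrt (by linarith [hx.1])
    _ = 1 := Real.sqrt_one
  have hts : t ∈ Set.Icc (0:ℝ) 1 :=
    ⟨by simp only [ht]; linarith, by simp only [ht]; linarith [Real.sqrt_nonneg (1-x)]⟩
  have key : ∀ θ ∈ Set.Icc (0:ℝ) 1,
      contRank ubMeas phiA f1 x θ true * post ubMeas ubPrior ubObs θ true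
        = if θ ≤ t then 2 * θ else 0 := by
    intro θ hθ
    rw [contRank, if_pos (ub_dtie _ _), ub_post_true, f1, ub_cdf_true θ hθ]
    have h1θ : (0:ℝ) ≤ 1 - θ := by linarith [hθ.2]
    have hiff : 2*θ - θ^2 ≤ x ↔ θ ≤ t := by
      rw [ht]
      constructor
      · intro h
        have h2 : Real.sqrt (1-x) ≤ 1 - θ := by
          rw [show (1:ℝ) - θ = Real.sqrt ((1-θ)^2) by rw [Real.sqrt_sq h1θ],
            Real.sqrt_le_sqrt_iff (by positivity)]
          nlinarith
        linarith
      · intro h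
        have h2 : Real.sqrt (1-x) ≤ 1 - θ := by linarith
        have h3 : 1 - x ≤ (1-θ)^2 := by
          calc 1 - x = Real.sqrt (1-x)^2 := (Real.sq_sqrt h1x).symm
          _ ≤ (1-θ)^2 := by nlinarith [Real.sqrt_nonneg (1-x)]
        nlinarith
    by_cases h : θ ≤ t
    · rw [if_pos (hiff.mpr h), if_pos h, one_mul]
    · rw [if_neg (fun hc => h (hiff.mp hc)), if_neg h, zero_mul]
  rw [qfun]
  refine Eq.trans (setIntegral_congr_fun (μ := MeasureTheory.volume) measurableSet_Icc key) ?_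
  refine Eq.trans (ub_integral_ite_le _ _ hts) ?_
  rw [ub_integral_id _ hts.1]

lemma bool_integral_count (g : Bool → ℝ) : ∫ y, g y ∂Measure.count = g false + g true := by
  rw [MeasureTheory.integral_fintype (Integrable.of_finite)]
  simp [Fintype.sum_bool]; ring

theorem correct_data_averaged_posterior_does_not_imply_SBC :
    (∀ s ∈ Set.Icc (0 : ℝ) 1,
      (1 / 2) * (Cdf ubMeas phiA f1 s false + Cdf ubMeas phiA f1 s true) = s)
    ∧ (¬ PassesContSBC ubMeas Measure.count ubPrior ubObs phiA f1)
    ∧ (∀ x ∈ Set.Icc (0 : ℝ) 1,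
        qfun ubMeas ubPrior ubObs phiA f1 x false = 2 * Real.sqrt x - x
        ∧ qfun ubMeas ubPrior ubObs phiA f1 x true = (1 - Real.sqrt (1 - x)) ^ 2)
    ∧ (∃ x ∈ Set.Icc (0 : ℝ) 1,
        (1 / 2) * (qfun ubMeas ubPrior ubObs phiA f1 x false
          + qfun ubMeas ubPrior ubObs phiA f1 x true) ≠ x) := by
  have part1 : ∀ s ∈ Set.Icc (0 : ℝ) 1,
      (1 / 2) * (Cdf ubMeas phiA f1 s false + Cdf ubMeas phiA f1 s true) = s := by
    intro s hs
    rw [ub_cdf_false s hs, ub_cdf_true s hs]; ring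
  have part3 : ∀ x ∈ Set.Icc (0 : ℝ) 1,
      qfun ubMeas ubPrior ubObs phiA f1 x false = 2 * Real.sqrt x - x
      ∧ qfun ubMeas ubPrior ubObs phiA f1 x true = (1 - Real.sqrt (1 - x)) ^ 2 :=
    fun x hx => ⟨ub_qfun_false x hx, ub_qfun_true x hx⟩
  have part4 : ∃ x ∈ Set.Icc (0 : ℝ) 1,
      (1 / 2) * (qfun ubMeas ubPrior ubObs phiA f1 x false
        + qfun ubMeas ubPrior ubObs phiA f1 x true) ≠ x := by
    refine ⟨1/4, by norm_num, ?_⟩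
    obtain ⟨hq0, hq1⟩ := part3 (1/4) (by norm_num)
    rw [hq0, hq1]
    have hs4 : Real.sqrt (1/4) = 1/2 := by
      rw [show (1:ℝ)/4 = (1/2)^2 by norm_num, Real.sqrt_sq (by norm_num)]
    have hs34 : Real.sqrt (1 - 1/4) ^ 2 = 1 - 1/4 := Real.sq_sqrt (by norm_num)
    have hs34' : Real.sqrt (1 - 1/4) ≤ 1 := by nlinarith [Real.sqrt_nonneg (1 - (1:ℝ)/4)]
    rw [hs4]
    intro heq
    nlinarith [Real.sqrt_nonneg (1 - (1:ℝ)/4), hs34, hs34']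
  have part2 : ¬ PassesContSBC ubMeas Measure.count ubPrior ubObs phiA f1 := by
    intro h
    obtain ⟨x, hx, hne⟩ := part4
    apply hne
    have := h x hx
    rw [bool_integral_count] at this
    rw [ub_marg, ub_marg] at this
    linarith
  exact ⟨part1, part2, part3, part4⟩

end SBC
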